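/- arXiv:math/0604160 — 5 statements merged into one kernel-verified Lean document; each statement's English description precedes it below -/
import Mathlib

section
/- Let (N, Γ, φ) be a crossed module of groups and A an abelian group. Let e ∈ C^{0,3} (a function Γ³ → A) satisfy ∂e = 0. Set c = T₁e ∈ C^{1,2}, b = −T₂e ∈ C^{2,1}, and a = −T₃e ∈ C^{3,0}. Then ∂c = 0, ∂'c = ∂b, and ∂'b = ∂a; that is, (c, b, a) is a multiplicator. (Corollary 3.11 of the paper, for a crossed module of groups with constant coefficients.) -/
open scoped Classical

/-- The group of `(k,l)`-cochains with values in `A`: all functions `N^k × Γ^l → A`. -/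
abbrev Cochain (N Γ A : Type*) (k l : ℕ) :=
  (Fin k → N) → (Fin l → Γ) → A

/-- Merge the entries at positions `i` and `i+1` of an `(n+1)`-tuple using multiplication. -/
def mergeAt {G : Type*} [Mul G] {n : ℕ} (g : Fin (n + 1) → G) (i : Fin n) : Fin n → G :=
  fun j =>
    if (j : ℕ) < (i : ℕ) then g (Fin.castSucc j)
    else if (j : ℕ) = (i : ℕ) then g (Fin.castSucc i) * g (Fin.succ i)
    else g (Fin.succ j)

/-- The simplicial differential `∂ : C^{k,l} → C^{k,l+1}` (in the `Γ`-direction),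
using the right action `act` of `Γ` on `N`. -/
def del {N Γ A : Type*} [Mul Γ] [AddCommGroup A] (act : N → Γ → N) {k l : ℕ}
    (η : Cochain N Γ A k l) : Cochain N Γ A k (l + 1) :=
  fun x g =>
    η (fun p => act (x p) (g 0)) (fun j => g (Fin.succ j))
      + ∑ i : Fin l, ((-1 : ℤ) ^ ((i : ℕ) + 1)) • η x (mergeAt g i)
      + ((-1 : ℤ) ^ (l + 1)) • η x (fun j => g (Fin.castSucc j))

/-- The differential `∂' : C^{k,l} → C^{k+1,l}` (in the `N`-direction). -/
def del' {N Γ A : Type*} [Mul N] [AddCommGroup A] {k l : ℕ}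
    (η : Cochain N Γ A k l) : Cochain N Γ A (k + 1) l :=
  fun x g =>
    η (fun p => x (Fin.succ p)) g
      + ∑ i : Fin k, ((-1 : ℤ) ^ ((i : ℕ) + 1)) • η (mergeAt x i) g
      + ((-1 : ℤ) ^ (k + 1)) • η (fun p => x (Fin.castSucc p)) g

/-- `f : Fin n → Fin n` is a `(k, n-k)`-shuffle: strictly increasing on indices `< k`
and on indices `≥ k`. -/
def IsShuffle {n : ℕ} (k : ℕ) (f : Fin n → Fin n) : Prop :=
  (∀ i j : Fin n, (i : ℕ) < (j : ℕ) → (j : ℕ) < k → f i < f j) ∧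
  (∀ i j : Fin n, (i : ℕ) < (j : ℕ) → k ≤ (i : ℕ) → f i < f j)

/-- The map `f̃_σ : N^k × Γ^l → Γ^{k+l}` associated to a `(k,l)`-shuffle `σ`. -/
def shuffleMap {N Γ : Type*} [Group Γ] (φ : N → Γ) (act : N → Γ → N) {k l : ℕ}
    (σ : Equiv.Perm (Fin (k + l))) (x : Fin k → N) (g : Fin l → Γ) :
    Fin (k + l) → Γ :=
  fun i =>
    if h : k ≤ (σ.symm i : ℕ) then
      g ⟨(σ.symm i : ℕ) - k, by have := (σ.symm i).isLt; omega⟩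
    else
      have hx : ((σ.symm i : ℕ)) < k := by omega
      let P : Γ :=
        (((List.finRange (k + l)).filter
            (fun j : Fin (k + l) => decide ((j : ℕ) < (i : ℕ) ∧ k ≤ (σ.symm j : ℕ)))).map
          (fun j : Fin (k + l) =>
            if h' : k ≤ (σ.symm j : ℕ) then
              g ⟨(σ.symm j : ℕ) - k, by have := (σ.symm j).isLt; omega⟩
            else 1)).prod
      φ (act (x ⟨(σ.symm i : ℕ), hx⟩) P)

/-- The transgression map `T_k : C^{0,p} → C^{k,l}` (where `k + l = p`), given by the
signed sum over all `(k,l)`-shuffles. -/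
noncomputable def Tmap {N Γ A : Type*} [Group Γ] [AddCommGroup A]
    (φ : N → Γ) (act : N → Γ → N) (k l p : ℕ) (h : k + l = p)
    (ω : Cochain N Γ A 0 p) : Cochain N Γ A k l :=
  fun x g =>
    ∑ σ : Equiv.Perm (Fin (k + l)),
      if IsShuffle k ⇑σ then
        ((Equiv.Perm.sign σ : ℤ)) •
          ω Fin.elim0 (fun i => shuffleMap φ act σ x g (Fin.cast h.symm i))
      else 0


/-!
Expanding `T_k e` as the signed sum over `(k, 3-k)`-shuffles, the crossed-module axiom
`φ(x^g) = g⁻¹ φ(x) g` turns every argument of `e` into a product of the `g_i` and conjugates of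
the `φ(x_j)`. Each of the three identities is then a signed sum of instances of the cocycle
identity `∂e = 0`, one for each `(k, 4-k)`-shuffle: the quadruple interleaving the (conjugated)
`φ(x_j)` with the `g_i`.
-/

section DifferentialFormulas

variable {N Γ A : Type*} [AddCommGroup A] {k l : ℕ}

theorem del_apply_one [Mul Γ] (act : N → Γ → N) (η : Cochain N Γ A k 1) (x : Fin k → N)
    (g : Fin 2 → Γ) :
    del act η x g = η (fun p => act (x p) (g 0)) ![g 1] - η x ![g 0 * g 1] + η x ![g 0] := by
  have hsucc : (fun j : Fin 1 => g j.succ) = ![g 1] := by funext j; fin_cases j; rfl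
  have hmerge : mergeAt g 0 = ![g 0 * g 1] := by funext j; fin_cases j; rfl
  have hcast : (fun j : Fin 1 => g j.castSucc) = ![g 0] := by funext j; fin_cases j; rfl
  simp [del, hsucc, hmerge, hcast, sub_eq_add_neg]

theorem del_apply_two [Mul Γ] (act : N → Γ → N) (η : Cochain N Γ A k 2) (x : Fin k → N)
    (g : Fin 3 → Γ) :
    del act η x g = η (fun p => act (x p) (g 0)) ![g 1, g 2] - η x ![g 0 * g 1, g 2]
      + η x ![g 0, g 1 * g 2] - η x ![g 0, g 1] := by
  have hsucc : (fun j : Fin 2 => g j.succ) = ![g 1, g 2] := by funext j; fin_cases j <;> rfl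
  have hmerge₀ : mergeAt g 0 = ![g 0 * g 1, g 2] := by funext j; fin_cases j <;> rfl
  have hmerge₁ : mergeAt g 1 = ![g 0, g 1 * g 2] := by funext j; fin_cases j <;> rfl
  have hcast : (fun j : Fin 2 => g j.castSucc) = ![g 0, g 1] := by funext j; fin_cases j <;> rfl
  simp [del, Fin.sum_univ_two, hsucc, hmerge₀, hmerge₁, hcast, sub_eq_add_neg, add_assoc]

theorem del_apply_three [Mul Γ] (act : N → Γ → N) (η : Cochain N Γ A k 3) (x : Fin k → N)
    (g : Fin 4 → Γ) :
    del act η x g = η (fun p => act (x p) (g 0)) ![g 1, g 2, g 3] - η x ![g 0 * g 1, g 2, g 3]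
      + η x ![g 0, g 1 * g 2, g 3] - η x ![g 0, g 1, g 2 * g 3] + η x ![g 0, g 1, g 2] := by
  have hsucc : (fun j : Fin 3 => g j.succ) = ![g 1, g 2, g 3] := by
    funext j; fin_cases j <;> rfl
  have hmerge₀ : mergeAt g 0 = ![g 0 * g 1, g 2, g 3] := by funext j; fin_cases j <;> rfl
  have hmerge₁ : mergeAt g 1 = ![g 0, g 1 * g 2, g 3] := by funext j; fin_cases j <;> rfl
  have hmerge₂ : mergeAt g 2 = ![g 0, g 1, g 2 * g 3] := by funext j; fin_cases j <;> rfl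
  have hcast : (fun j : Fin 3 => g j.castSucc) = ![g 0, g 1, g 2] := by
    funext j; fin_cases j <;> rfl
  simp [del, Fin.sum_univ_three, hsucc, hmerge₀, hmerge₁, hmerge₂, hcast, sub_eq_add_neg,
    add_assoc]

theorem del_apply_zero [Mul Γ] (act : N → Γ → N) (η : Cochain N Γ A k 0) (x : Fin k → N)
    (g : Fin 1 → Γ) :
    del act η x g = η (fun p => act (x p) (g 0)) ![] - η x ![] := by
  simp [del, Subsingleton.elim _ (![] : Fin 0 → Γ), sub_eq_add_neg]

theorem del'_apply_one [Mul N] (η : Cochain N Γ A 1 l) (x : Fin 2 → N) (g : Fin l → Γ) :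
    del' η x g = η ![x 1] g - η ![x 0 * x 1] g + η ![x 0] g := by
  have hsucc : (fun p : Fin 1 => x p.succ) = ![x 1] := by funext p; fin_cases p; rfl
  have hmerge : mergeAt x 0 = ![x 0 * x 1] := by funext p; fin_cases p; rfl
  have hcast : (fun p : Fin 1 => x p.castSucc) = ![x 0] := by funext p; fin_cases p; rfl
  simp [del', hsucc, hmerge, hcast, sub_eq_add_neg]

theorem del'_apply_two [Mul N] (η : Cochain N Γ A 2 l) (x : Fin 3 → N) (g : Fin l → Γ) :
    del' η x g = η ![x 1, x 2] g - η ![x 0 * x 1, x 2] g + η ![x 0, x 1 * x 2] g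
      - η ![x 0, x 1] g := by
  have hsucc : (fun p : Fin 2 => x p.succ) = ![x 1, x 2] := by funext p; fin_cases p <;> rfl
  have hmerge₀ : mergeAt x 0 = ![x 0 * x 1, x 2] := by funext p; fin_cases p <;> rfl
  have hmerge₁ : mergeAt x 1 = ![x 0, x 1 * x 2] := by funext p; fin_cases p <;> rfl
  have hcast : (fun p : Fin 2 => x p.castSucc) = ![x 0, x 1] := by funext p; fin_cases p <;> rfl
  simp [del', Fin.sum_univ_two, hsucc, hmerge₀, hmerge₁, hcast, sub_eq_add_neg, add_assoc]

end DifferentialFormulas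

section Shuffles

def p012 : Equiv.Perm (Fin 3) := ⟨![0, 1, 2], ![0, 1, 2], by decide, by decide⟩
def p021 : Equiv.Perm (Fin 3) := ⟨![0, 2, 1], ![0, 2, 1], by decide, by decide⟩
def p102 : Equiv.Perm (Fin 3) := ⟨![1, 0, 2], ![1, 0, 2], by decide, by decide⟩
def p120 : Equiv.Perm (Fin 3) := ⟨![1, 2, 0], ![2, 0, 1], by decide, by decide⟩
def p201 : Equiv.Perm (Fin 3) := ⟨![2, 0, 1], ![1, 2, 0], by decide, by decide⟩
def p210 : Equiv.Perm (Fin 3) := ⟨![2, 1, 0], ![2, 1, 0], by decide, by decide⟩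

@[simp] theorem coe_p012 : ⇑p012 = ![0, 1, 2] := rfl
@[simp] theorem coe_p021 : ⇑p021 = ![0, 2, 1] := rfl
@[simp] theorem coe_p102 : ⇑p102 = ![1, 0, 2] := rfl
@[simp] theorem coe_p120 : ⇑p120 = ![1, 2, 0] := rfl
@[simp] theorem coe_p201 : ⇑p201 = ![2, 0, 1] := rfl
@[simp] theorem coe_p210 : ⇑p210 = ![2, 1, 0] := rfl
@[simp] theorem coe_symm_p012 : ⇑p012.symm = ![0, 1, 2] := rfl
@[simp] theorem coe_symm_p021 : ⇑p021.symm = ![0, 2, 1] := rfl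
@[simp] theorem coe_symm_p102 : ⇑p102.symm = ![1, 0, 2] := rfl
@[simp] theorem coe_symm_p120 : ⇑p120.symm = ![2, 0, 1] := rfl
@[simp] theorem coe_symm_p201 : ⇑p201.symm = ![1, 2, 0] := rfl
@[simp] theorem sign_p012 : Equiv.Perm.sign p012 = 1 := by decide
@[simp] theorem sign_p021 : Equiv.Perm.sign p021 = -1 := by decide
@[simp] theorem sign_p102 : Equiv.Perm.sign p102 = -1 := by decide
@[simp] theorem sign_p120 : Equiv.Perm.sign p120 = 1 := by decide
@[simp] theorem sign_p201 : Equiv.Perm.sign p201 = 1 := by decide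

theorem sum_perm_fin_three {M : Type*} [AddCommMonoid M] (f : Equiv.Perm (Fin 3) → M) :
    ∑ σ, f σ = f p012 + f p021 + f p102 + f p120 + f p201 + f p210 := by
  rw [show (Finset.univ : Finset (Equiv.Perm (Fin 3))) = {p012, p021, p102, p120, p201, p210} by
    decide]
  rw [Finset.sum_insert (by decide), Finset.sum_insert (by decide), Finset.sum_insert (by decide),
    Finset.sum_insert (by decide), Finset.sum_insert (by decide), Finset.sum_singleton]
  simp only [add_assoc]

variable {N Γ A : Type*} [Group Γ] [AddCommGroup A] (φ : N → Γ) (act : N → Γ → N)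
  (e : Cochain N Γ A 0 3)

theorem Tmap_one_two_apply (x : Fin 1 → N) (g : Fin 2 → Γ) :
    Tmap φ act 1 2 3 rfl e x g =
      e Fin.elim0 ![φ (act (x 0) 1), g 0, g 1]
        - e Fin.elim0 ![g 0, φ (act (x 0) (g 0)), g 1]
        + e Fin.elim0 ![g 0, g 1, φ (act (x 0) (g 0 * g 1))] := by
  have h012 : shuffleMap φ act p012 x g = ![φ (act (x 0) 1), g 0, g 1] := by
    funext i; fin_cases i <;> simp [shuffleMap, List.finRange]
  have h102 : shuffleMap φ act p102 x g = ![g 0, φ (act (x 0) (g 0)), g 1] := by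
    funext i; fin_cases i <;> simp [shuffleMap, List.finRange]
  have h201 : shuffleMap φ act p201 x g = ![g 0, g 1, φ (act (x 0) (g 0 * g 1))] := by
    funext i; fin_cases i <;> simp [shuffleMap, List.finRange]
  rw [Tmap, sum_perm_fin_three]
  simp [IsShuffle, Fin.forall_fin_succ, h012, h102, h201, sub_eq_add_neg]

theorem Tmap_two_one_apply (x : Fin 2 → N) (g : Fin 1 → Γ) :
    Tmap φ act 2 1 3 rfl e x g =
      e Fin.elim0 ![φ (act (x 0) 1), φ (act (x 1) 1), g 0]
        - e Fin.elim0 ![φ (act (x 0) 1), g 0, φ (act (x 1) (g 0))]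
        + e Fin.elim0 ![g 0, φ (act (x 0) (g 0)), φ (act (x 1) (g 0))] := by
  have h012 : shuffleMap φ act p012 x g = ![φ (act (x 0) 1), φ (act (x 1) 1), g 0] := by
    funext i; fin_cases i <;> simp [shuffleMap, List.finRange]
  have h021 : shuffleMap φ act p021 x g = ![φ (act (x 0) 1), g 0, φ (act (x 1) (g 0))] := by
    funext i; fin_cases i <;> simp [shuffleMap, List.finRange]
  have h120 :
      shuffleMap φ act p120 x g = ![g 0, φ (act (x 0) (g 0)), φ (act (x 1) (g 0))] := by
    funext i; fin_cases i <;> simp [shuffleMap, List.finRange]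
  rw [Tmap, sum_perm_fin_three]
  simp [IsShuffle, Fin.forall_fin_succ, h012, h021, h120, sub_eq_add_neg]

theorem Tmap_three_zero_apply (x : Fin 3 → N) (g : Fin 0 → Γ) :
    Tmap φ act 3 0 3 rfl e x g =
      e Fin.elim0 ![φ (act (x 0) 1), φ (act (x 1) 1), φ (act (x 2) 1)] := by
  have h012 :
      shuffleMap φ act p012 x g = ![φ (act (x 0) 1), φ (act (x 1) 1), φ (act (x 2) 1)] := by
    funext i; fin_cases i <;> simp [shuffleMap, List.finRange]
  rw [Tmap, sum_perm_fin_three]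
  simp [IsShuffle, Fin.forall_fin_succ, h012]

end Shuffles

section Multiplicator

variable {N Γ A : Type*} [Group Γ] [AddCommGroup A] {act : N → Γ → N} {e : Cochain N Γ A 0 3}

theorem cocycle_identity (he : del act e = 0) (a b c d : Γ) :
    e Fin.elim0 ![b, c, d] + e Fin.elim0 ![a, b * c, d] + e Fin.elim0 ![a, b, c] =
      e Fin.elim0 ![a * b, c, d] + e Fin.elim0 ![a, b, c * d] := by
  have h := congrFun (congrFun he Fin.elim0) ![a, b, c, d]
  rw [del_apply_three, Subsingleton.elim (fun p => act _ _) Fin.elim0] at h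
  simp only [Matrix.cons_val, Pi.zero_apply] at h
  linear_combination (norm := abel) h

theorem del_Tmap_one_two_eq_zero {φ : N → Γ} (hφ : ∀ x g, φ (act x g) = g⁻¹ * φ x * g)
    (he : del act e = 0) : del act (Tmap φ act 1 2 3 rfl e) = 0 := by
  funext x g
  have h₁ := cocycle_identity he (φ (x 0)) (g 0) (g 1) (g 2)
  have h₂ := cocycle_identity he (g 0) (φ (act (x 0) (g 0))) (g 1) (g 2)
  have h₃ := cocycle_identity he (g 0) (g 1) (φ (act (x 0) (g 0 * g 1))) (g 2)
  have h₄ := cocycle_identity he (g 0) (g 1) (g 2) (φ (act (x 0) (g 0 * g 1 * g 2)))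
  simp only [del_apply_two, Tmap_one_two_apply, Matrix.cons_val, Pi.zero_apply]
  simp only [hφ, inv_one, one_mul, mul_one, mul_inv_rev, mul_assoc, mul_inv_cancel_left]
    at h₁ h₂ h₃ h₄ ⊢
  linear_combination (norm := abel) -h₁ + h₂ - h₃ + h₄

theorem del'_Tmap_one_two_eq_del_neg_Tmap_two_one [Mul N] {φ : N →ₙ* Γ}
    (hφ : ∀ x g, φ (act x g) = g⁻¹ * φ x * g) (he : del act e = 0) :
    del' (Tmap φ act 1 2 3 rfl e) = del act (-Tmap φ act 2 1 3 rfl e) := by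
  funext x g
  have h₁ := cocycle_identity he (φ (x 0)) (φ (x 1)) (g 0) (g 1)
  have h₂ := cocycle_identity he (φ (x 0)) (g 0) (φ (act (x 1) (g 0))) (g 1)
  have h₃ := cocycle_identity he (φ (x 0)) (g 0) (g 1) (φ (act (x 1) (g 0 * g 1)))
  have h₄ := cocycle_identity he (g 0) (φ (act (x 0) (g 0))) (φ (act (x 1) (g 0))) (g 1)
  have h₅ := cocycle_identity he (g 0) (φ (act (x 0) (g 0))) (g 1) (φ (act (x 1) (g 0 * g 1)))
  have h₆ := cocycle_identity he (g 0) (g 1) (φ (act (x 0) (g 0 * g 1)))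
    (φ (act (x 1) (g 0 * g 1)))
  simp only [del'_apply_one, del_apply_one, Tmap_one_two_apply, Tmap_two_one_apply,
    Matrix.cons_val, Pi.neg_apply]
  simp only [hφ, map_mul, inv_one, one_mul, mul_one, mul_inv_rev, mul_assoc, mul_inv_cancel_left]
    at h₁ h₂ h₃ h₄ h₅ h₆ ⊢
  linear_combination (norm := abel) h₁ - h₂ + h₃ + h₄ - h₅ + h₆

theorem del'_neg_Tmap_two_one_eq_del_neg_Tmap_three_zero [Mul N] {φ : N →ₙ* Γ}
    (hφ : ∀ x g, φ (act x g) = g⁻¹ * φ x * g) (he : del act e = 0) :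
    del' (-Tmap φ act 2 1 3 rfl e) = del act (-Tmap φ act 3 0 3 rfl e) := by
  funext x g
  have h₁ := cocycle_identity he (g 0) (φ (act (x 0) (g 0))) (φ (act (x 1) (g 0)))
    (φ (act (x 2) (g 0)))
  have h₂ := cocycle_identity he (φ (x 0)) (g 0) (φ (act (x 1) (g 0))) (φ (act (x 2) (g 0)))
  have h₃ := cocycle_identity he (φ (x 0)) (φ (x 1)) (g 0) (φ (act (x 2) (g 0)))
  have h₄ := cocycle_identity he (φ (x 0)) (φ (x 1)) (φ (x 2)) (g 0)
  simp only [del'_apply_two, del_apply_zero, Tmap_two_one_apply, Tmap_three_zero_apply,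
    Matrix.cons_val, Pi.neg_apply]
  simp only [hφ, map_mul, inv_one, one_mul, mul_one, mul_assoc, mul_inv_cancel_left]
    at h₁ h₂ h₃ h₄ ⊢
  linear_combination (norm := abel) h₁ - h₂ + h₃ - h₄

end Multiplicator

theorem statement3_general {N Γ A : Type*} [Group N] [Group Γ] [AddCommGroup A]
    (act : N → Γ → N) (φ : N →* Γ)
    (hequiv : ∀ (x : N) (g : Γ), φ (act x g) = g⁻¹ * φ x * g)
    (e : Cochain N Γ A 0 3) (he : del act e = 0) :
    del act (Tmap (⇑φ) act 1 2 3 rfl e) = 0 ∧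
    del' (Tmap (⇑φ) act 1 2 3 rfl e) = del act (-Tmap (⇑φ) act 2 1 3 rfl e) ∧
    del' (-Tmap (⇑φ) act 2 1 3 rfl e) = del act (-Tmap (⇑φ) act 3 0 3 rfl e) :=
  ⟨del_Tmap_one_two_eq_zero hequiv he,
    del'_Tmap_one_two_eq_del_neg_Tmap_two_one (φ := φ.toMulHom) hequiv he,
    del'_neg_Tmap_two_one_eq_del_neg_Tmap_three_zero (φ := φ.toMulHom) hequiv he⟩

/-- Corollary 3.11: for a crossed module of groups `(N, Γ, φ)` and
constant coefficients `A`, if `e ∈ C^{0,3}` satisfies `∂e = 0`, then with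
`c = T₁e`, `b = −T₂e`, `a = −T₃e` one has `∂c = 0`, `∂'c = ∂b` and `∂'b = ∂a`;
that is, `(c, b, a)` is a multiplicator. -/
theorem statement3 {N Γ A : Type*} [Group N] [Group Γ] [AddCommGroup A]
    (act : N → Γ → N) (φ : N →* Γ)
    (hact_mul : ∀ (x y : N) (g : Γ), act (x * y) g = act x g * act y g)
    (hact_act : ∀ (x : N) (g h : Γ), act (act x g) h = act x (g * h))
    (hact_one : ∀ x : N, act x 1 = x)
    (hequiv : ∀ (x : N) (g : Γ), φ (act x g) = g⁻¹ * φ x * g)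
    (hpeiffer : ∀ x y : N, act x (φ y) = y⁻¹ * x * y)
    (e : Cochain N Γ A 0 3) (he : del act e = 0) :
    del act (Tmap (⇑φ) act 1 2 3 rfl e) = 0 ∧
    del' (Tmap (⇑φ) act 1 2 3 rfl e) = del act (-Tmap (⇑φ) act 2 1 3 rfl e) ∧
    del' (-Tmap (⇑φ) act 2 1 3 rfl e) = del act (-Tmap (⇑φ) act 3 0 3 rfl e) :=
  statement3_general act φ hequiv e he
end

section
/- Let (N, Γ, φ) be a crossed module of groups and A an abelian group. Say that every η ∈ C^{k,m} is 0-multiplicative, and for r ≥ 1 that η ∈ C^{k,m} is r-multiplicative if there exists an (r−1)-multiplicative β ∈ C^{k+1,m−1} with ∂'η = ∂β. Then for every c ∈ C^{k,n}, every c' ∈ C^{k,n−1}, and every r ≥ 0: c is r-multiplicative if and only if c + ∂c' is r-multiplicative. (Remark 3.10 of the paper: r-multiplicativity depends only on the ∂-cohomology class; group case with constant coefficients.) -/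
open scoped Classical

/-- `η ∈ C^{k,m}` is `r`-multiplicative: every cochain is `0`-multiplicative, and `η`
is `(r+1)`-multiplicative if `∂'η = ∂β` for some `r`-multiplicative `β ∈ C^{k+1,m−1}`. -/
def IsMult {N Γ A : Type*} [Mul N] [Mul Γ] [AddCommGroup A] (act : N → Γ → N) :
    ℕ → (k m : ℕ) → Cochain N Γ A k m → Prop
  | 0, _, _, _ => True
  | r + 1, k, m, η =>
      ∃ (m' : ℕ) (hm : m = m' + 1) (β : Cochain N Γ A (k + 1) m'),
        IsMult act r (k + 1) m' β ∧
        ∀ (x : Fin (k + 1) → N) (g : Fin m → Γ),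
          del' η x g = del act β x fun i => g (Fin.cast hm.symm i)

/-! The differentials `∂` and `∂'` commute (this is where `act` being multiplicative enters), and
`∂' ∘ ∂' = 0` by the simplicial identities of the bar construction. So if `∂'c = ∂β`, then
`∂'(c + ∂c') = ∂(β + ∂'c')`, and `β + ∂'c'` is as multiplicative as `β`, since adding a
`∂'`-coboundary does not change `∂'`. The converse direction is the same argument with `-c'`. -/

/-- The `i`-th face of the bar construction: drop `x 0` for `i = 0`, multiply `x (i-1) * x i` for
`0 < i ≤ n`, drop `x n` for `i = n + 1`. -/
def barFace {G : Type*} [Mul G] {n : ℕ} (x : Fin (n + 1) → G) (i : Fin (n + 2)) : Fin n → G :=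
  fun p =>
    if p.1 + 1 < i.1 then x p.castSucc
    else if p.1 + 1 = i.1 then x p.castSucc * x p.succ
    else x p.succ

section
variable {G : Type*} [Mul G] {n : ℕ}

lemma barFace_zero (x : Fin (n + 1) → G) : barFace x 0 = fun p => x p.succ := by
  funext p
  simp [barFace]

lemma barFace_succ_castSucc (x : Fin (n + 1) → G) (i : Fin n) :
    barFace x i.castSucc.succ = mergeAt x i := by
  funext p
  simp only [barFace, mergeAt, Fin.val_succ, Fin.val_castSucc]
  split_ifs <;> first | omega | rfl | (congr 2 <;> ext <;> simp <;> omega)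

lemma barFace_last (x : Fin (n + 1) → G) :
    barFace x (Fin.last (n + 1)) = fun p => x p.castSucc := by
  funext p
  simp [barFace]

end

lemma barFace_barFace {G : Type*} [Semigroup G] {n : ℕ} (x : Fin (n + 2) → G)
    {i j : Fin (n + 2)} (hji : j ≤ i) :
    barFace (barFace x i.succ) j = barFace (barFace x j.castSucc) i := by
  funext p
  rw [Fin.le_iff_val_le_val] at hji
  simp only [barFace, Fin.val_succ, Fin.val_castSucc, Fin.succ_castSucc]
  split_ifs <;> first | omega | rfl | simp only [mul_assoc]

lemma sum_sum_neg_one_pow_smul_eq_zero {A : Type*} [AddCommGroup A] {n : ℕ}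
    (G : Fin (n + 3) → Fin (n + 2) → A)
    (hG : ∀ i j : Fin (n + 2), j ≤ i → G i.succ j = G j.castSucc i) :
    ∑ i : Fin (n + 3), ∑ j : Fin (n + 2), (-1 : ℤ) ^ ((i : ℕ) + j) • G i j = 0 := by
  rw [← Fintype.sum_prod_type']
  -- `(i, j)` with `j < i` is paired with `(j, i - 1)`; their terms cancel.
  refine Finset.sum_ninvolution
    (fun p => if h : p.2.castSucc < p.1 then (p.2.castSucc, p.1.pred (Fin.ne_zero_of_lt h))
      else (p.2.succ, p.1.castLT (by simp [Fin.lt_def] at h ⊢; omega))) ?_ ?_ (by simp) ?_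
  · rintro ⟨i, j⟩
    dsimp only
    split_ifs with h
    · obtain ⟨i, rfl⟩ := Fin.exists_succ_eq.2 (Fin.ne_zero_of_lt h)
      rw [Fin.pred_succ, hG i j (Fin.castSucc_lt_succ_iff.1 h), Fin.val_succ, Fin.val_castSucc,
        show (i : ℕ) + 1 + j = j + i + 1 by ring, pow_succ]
      simp
    · dsimp only
      rw [hG j (i.castLT _) (by simpa [Fin.le_def, Fin.lt_def] using h), Fin.castSucc_castLT,
        Fin.val_succ, Fin.val_castLT, show (j : ℕ) + 1 + i = i + j + 1 by ring, pow_succ]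
      simp
  · rintro ⟨i, j⟩ -
    simp only [Fin.lt_def, Fin.val_castSucc]
    split_ifs with h <;> simp [Prod.ext_iff, Fin.ext_iff] <;> omega
  · rintro ⟨i, j⟩
    by_cases h : j.castSucc < i
    · have h' : ¬ (i.pred (Fin.ne_zero_of_lt h)).castSucc < j.castSucc := by
        simp [Fin.lt_def] at h ⊢; omega
      simp only [dif_pos h, dif_neg h', Fin.succ_pred, Fin.castLT_castSucc]
    · have h' : i < j.succ := (not_lt.1 h).trans_lt Fin.castSucc_lt_succ
      simp only [dif_neg h, Fin.castSucc_castLT, dif_pos h', Fin.pred_succ]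

lemma barFace_map {G H : Type*} [Mul G] [Mul H] (f : G → H) (hf : ∀ a b, f (a * b) = f a * f b)
    {n : ℕ} (x : Fin (n + 1) → G) (i : Fin (n + 2)) :
    barFace (fun p => f (x p)) i = fun p => f (barFace x i p) := by
  funext p
  simp only [barFace]
  split_ifs <;> simp only [hf]

section
variable {N Γ A : Type*} [AddCommGroup A]

lemma del'_eq_sum [Mul N] {k l : ℕ} (η : Cochain N Γ A k l) (x : Fin (k + 1) → N)
    (g : Fin l → Γ) :
    del' η x g = ∑ i : Fin (k + 2), (-1 : ℤ) ^ (i : ℕ) • η (barFace x i) g := by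
  rw [Fin.sum_univ_succ, Fin.sum_univ_castSucc]
  simp only [barFace_zero, barFace_succ_castSucc, Fin.succ_last, barFace_last, Fin.val_zero,
    Fin.val_succ, Fin.val_castSucc, Fin.val_last, pow_zero, one_smul, del']
  abel

lemma del_eq_sum [Mul Γ] (act : N → Γ → N) {k l : ℕ} (η : Cochain N Γ A k l) (x : Fin k → N)
    (g : Fin (l + 1) → Γ) :
    del act η x g = ∑ j : Fin (l + 2), (-1 : ℤ) ^ (j : ℕ) •
      η (if (j : ℕ) = 0 then fun p => act (x p) (g 0) else x) (barFace g j) := by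
  rw [Fin.sum_univ_succ, Fin.sum_univ_castSucc]
  simp only [barFace_zero, barFace_succ_castSucc, Fin.succ_last, barFace_last, Fin.val_zero,
    Fin.val_succ, Fin.val_castSucc, Fin.val_last, pow_zero, one_smul, if_true,
    Nat.succ_ne_zero, if_false, del]
  abel

lemma del'_del' [Semigroup N] {k m : ℕ} (η : Cochain N Γ A k m) : del' (del' η) = 0 := by
  funext x g
  simp only [del'_eq_sum, Finset.smul_sum, smul_smul, ← pow_add, Pi.zero_apply]
  exact sum_sum_neg_one_pow_smul_eq_zero (fun i j => η (barFace (barFace x i) j) g)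
    fun i j hji => by rw [barFace_barFace x hji]

lemma del'_del [Mul N] [Mul Γ] (act : N → Γ → N)
    (hact_mul : ∀ (x y : N) (g : Γ), act (x * y) g = act x g * act y g)
    {k m : ℕ} (η : Cochain N Γ A k m) : del' (del act η) = del act (del' η) := by
  funext x g
  simp only [del'_eq_sum, del_eq_sum, Finset.smul_sum, smul_smul]
  rw [Finset.sum_comm]
  refine Finset.sum_congr rfl fun j _ => Finset.sum_congr rfl fun i _ => ?_
  split_ifs <;> simp only [barFace_map (act · (g 0)) (hact_mul · · _), mul_comm]

lemma del_add [Mul Γ] (act : N → Γ → N) {k l : ℕ} (η₁ η₂ : Cochain N Γ A k l) :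
    del act (η₁ + η₂) = del act η₁ + del act η₂ := by
  funext x g
  simp only [del, Pi.add_apply, smul_add, Finset.sum_add_distrib]
  abel

lemma del_neg [Mul Γ] (act : N → Γ → N) {k l : ℕ} (η : Cochain N Γ A k l) :
    del act (-η) = -del act η := by
  funext x g
  simp only [del, Pi.neg_apply, smul_neg, Finset.sum_neg_distrib]
  abel

lemma del'_add [Mul N] {k l : ℕ} (η₁ η₂ : Cochain N Γ A k l) :
    del' (η₁ + η₂) = del' η₁ + del' η₂ := by
  funext x g
  simp only [del', Pi.add_apply, smul_add, Finset.sum_add_distrib]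
  abel

lemma IsMult.add_del' [Semigroup N] [Mul Γ] {act : N → Γ → N} {r k m : ℕ}
    {η : Cochain N Γ A (k + 1) m} (h : IsMult act r (k + 1) m η) (d : Cochain N Γ A k m) :
    IsMult act r (k + 1) m (η + del' d) := by
  cases r with
  | zero => trivial
  | succ r =>
    obtain ⟨m', hm, β, hβ, hηβ⟩ := h
    exact ⟨m', hm, β, hβ, fun x g => by simp [del'_add, del'_del', hηβ]⟩

lemma IsMult.add_del [Semigroup N] [Mul Γ] {act : N → Γ → N}
    (hact_mul : ∀ (x y : N) (g : Γ), act (x * y) g = act x g * act y g) {r k m : ℕ}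
    {η : Cochain N Γ A k (m + 1)} (h : IsMult act r k (m + 1) η) (c : Cochain N Γ A k m) :
    IsMult act r k (m + 1) (η + del act c) := by
  cases r with
  | zero => trivial
  | succ r =>
    obtain ⟨m', hm, β, hβ, hηβ⟩ := h
    obtain rfl : m = m' := Nat.succ_injective hm
    refine ⟨m, rfl, β + del' c, hβ.add_del' c, fun x g => ?_⟩
    simp only [del'_add, Pi.add_apply, hηβ, del'_del act hact_mul, del_add, Fin.cast_eq_self]

end

theorem statement5_general {N Γ A : Type*} [Group N] [Group Γ] [AddCommGroup A]
    (act : N → Γ → N)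
    (hact_mul : ∀ (x y : N) (g : Γ), act (x * y) g = act x g * act y g)
    (k m r : ℕ) (c : Cochain N Γ A k (m + 1)) (c' : Cochain N Γ A k m) :
    IsMult act r k (m + 1) c ↔ IsMult act r k (m + 1) (c + del act c') := by
  refine ⟨fun h => h.add_del hact_mul c', fun h => ?_⟩
  simpa only [del_neg, add_neg_cancel_right] using h.add_del hact_mul (-c')

/-- Remark 3.10: for a crossed module of groups `(N, Γ, φ)` and
constant coefficients `A`, `r`-multiplicativity only depends on the `∂`-cohomology
class: `c ∈ C^{k,n}` is `r`-multiplicative iff `c + ∂c'` is, for any `c' ∈ C^{k,n−1}`. -/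
theorem statement5 {N Γ A : Type*} [Group N] [Group Γ] [AddCommGroup A]
    (act : N → Γ → N) (φ : N →* Γ)
    (hact_mul : ∀ (x y : N) (g : Γ), act (x * y) g = act x g * act y g)
    (hact_act : ∀ (x : N) (g h : Γ), act (act x g) h = act x (g * h))
    (hact_one : ∀ x : N, act x 1 = x)
    (hequiv : ∀ (x : N) (g : Γ), φ (act x g) = g⁻¹ * φ x * g)
    (hpeiffer : ∀ x y : N, act x (φ y) = y⁻¹ * x * y)
    (k m r : ℕ) (c : Cochain N Γ A k (m + 1)) (c' : Cochain N Γ A k m) :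
    IsMult act r k (m + 1) c ↔ IsMult act r k (m + 1) (c + del act c') :=
  statement5_general act hact_mul k m r c c'
end

section
/- Let k, l ≥ 0, let σ be a (k+1,l)-shuffle of {1,…,k+l+1}, let m ∈ {1,…,k+1}, and set j = σ(m). For 1 ≤ r ≤ k+l+1 let ε_r : {1,…,k+l} → {1,…,k+l+1} denote the unique strictly increasing map whose image is {1,…,k+l+1}∖{r}. Then: (a) there is a unique map τ : {1,…,k+l} → {1,…,k+l} with ε_j ∘ τ = σ ∘ ε_m; (b) this τ is a bijection and is a (k,l)-shuffle; and (c) sign(τ) = (−1)^{j−m} sign(σ). (The key combinatorial step, claims (i) in case 1 of the proof of Lemma 3.2 of the paper: removing a black ball from a shuffle.) -/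
namespace Fin

variable {n : ℕ}

lemma val_succAbove_le_succ (p : Fin (n + 1)) (i : Fin n) : (p.succAbove i : ℕ) ≤ i + 1 := by
  rcases lt_or_ge i.castSucc p with h | h
  · rw [succAbove_of_castSucc_lt p i h, val_castSucc]; omega
  · rw [succAbove_of_le_castSucc p i h, val_succ]

lemma val_succAbove_of_le (p : Fin (n + 1)) (i : Fin n) (h : (p : ℕ) ≤ i) :
    (p.succAbove i : ℕ) = i + 1 := by
  rw [succAbove_of_le_castSucc p i (by rwa [le_def, val_castSucc]), val_succ]

end Fin

namespace Equiv.Perm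

variable {n : ℕ}

def removeNth (σ : Perm (Fin (n + 1))) (m : Fin (n + 1)) : Perm (Fin n) :=
  (finSuccAboveEquiv m).trans <|
    (σ.subtypeEquiv fun a => (σ.injective.ne_iff : σ a ≠ σ m ↔ a ≠ m).symm).trans
      (finSuccAboveEquiv (σ m)).symm

@[simp]
lemma succAbove_removeNth_apply (σ : Perm (Fin (n + 1))) (m : Fin (n + 1)) (i : Fin n) :
    (σ m).succAbove (σ.removeNth m i) = σ (m.succAbove i) := by
  have h := (finSuccAboveEquiv (σ m)).apply_symm_apply
    ⟨σ (m.succAbove i), σ.injective.ne (m.succAbove_ne i)⟩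
  exact congrArg Subtype.val h

lemma removeNth_eq_of_succAbove_comp {σ : Perm (Fin (n + 1))} {m : Fin (n + 1)}
    {τ : Fin n → Fin n} (h : ∀ i, (σ m).succAbove (τ i) = σ (m.succAbove i)) :
    τ = σ.removeNth m :=
  funext fun i =>
    Fin.succAbove_right_injective <| (h i).trans (σ.succAbove_removeNth_apply m i).symm

lemma cycleRange_mul_mul_cycleRange_inv (σ : Perm (Fin (n + 1))) (m : Fin (n + 1)) :
    (σ m).cycleRange * σ * m.cycleRange⁻¹ = decomposeFin.symm (0, σ.removeNth m) := by
  ext x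
  induction x using Fin.cases with
  | zero =>
    rw [decomposeFin_symm_apply_zero, mul_apply, mul_apply,
      inv_eq_iff_eq.mpr m.cycleRange_self.symm, Fin.cycleRange_self]
  | succ i =>
    rw [decomposeFin_symm_apply_succ, swap_self, refl_apply, mul_apply, mul_apply,
      inv_eq_iff_eq.mpr (m.cycleRange_succAbove i).symm, ← succAbove_removeNth_apply,
      Fin.cycleRange_succAbove]

lemma sign_removeNth (σ : Perm (Fin (n + 1))) (m : Fin (n + 1)) :
    sign (σ.removeNth m) = (-1) ^ ((σ m : ℕ) + m) * sign σ := by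
  have h := congrArg sign (σ.cycleRange_mul_mul_cycleRange_inv m)
  rw [decomposeFin.symm_sign, if_pos rfl, one_mul, map_mul, map_mul, map_inv,
    Fin.sign_cycleRange, Fin.sign_cycleRange] at h
  rw [← h, pow_add, Int.units_inv_eq_self, mul_right_comm]

end Equiv.Perm

namespace IsShuffle

variable {n k : ℕ} {f : Fin n → Fin n}

lemma le_apply (hf : IsShuffle k f) : ∀ i : Fin n, (i : ℕ) < k → (i : ℕ) ≤ f i
  | ⟨0, _⟩, _ => Nat.zero_le _
  | ⟨s + 1, hs⟩, hk =>
    have hle := hf.le_apply ⟨s, by omega⟩ (Nat.lt_of_succ_lt hk)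
    Nat.succ_le_of_lt (hle.trans_lt (hf.1 ⟨s, by omega⟩ ⟨s + 1, hs⟩ s.lt_succ_self hk))

lemma removeNth {σ : Equiv.Perm (Fin (n + 1))} (hσ : IsShuffle (k + 1) σ) {m : Fin (n + 1)}
    (hm : (m : ℕ) < k + 1) : IsShuffle k (σ.removeNth m) := by
  have hlt {a b : Fin n} :
      σ.removeNth m a < σ.removeNth m b ↔ σ (m.succAbove a) < σ (m.succAbove b) := by
    rw [← Fin.succAbove_lt_succAbove_iff (p := σ m), σ.succAbove_removeNth_apply,
      σ.succAbove_removeNth_apply]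
  refine ⟨fun a b hab hb => hlt.mpr ?_, fun a b hab ha => hlt.mpr ?_⟩
  · exact hσ.1 _ _ (Fin.succAbove_lt_succAbove_iff.mpr hab)
      (by have := m.val_succAbove_le_succ b; omega)
  · exact hσ.2 _ _ (Fin.succAbove_lt_succAbove_iff.mpr hab)
      (by rw [m.val_succAbove_of_le a (by omega)]; omega)

end IsShuffle

/-- claims (i), case 1, in the proof of Lemma 3.2: removing a black
ball from a shuffle. Let `σ` be a `(k+1,l)`-shuffle, `m` an index in the first block,
and `j = σ(m)`.  Here `ε_r = Fin.succAbove r` is the strictly increasing injection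
omitting `r`.  Then there is a unique `τ : Fin (k+l) → Fin (k+l)` with
`ε_j ∘ τ = σ ∘ ε_m`; it is a bijection, a `(k,l)`-shuffle, and its sign satisfies
`sign τ = (−1)^{j−m} sign σ`. -/
theorem statement9 (k l : ℕ) (σ : Equiv.Perm (Fin (k + l + 1)))
    (hσ : IsShuffle (k + 1) ⇑σ) (m : Fin (k + l + 1)) (hm : (m : ℕ) < k + 1) :
    ∃ τ : Fin (k + l) → Fin (k + l),
      (∀ i : Fin (k + l), Fin.succAbove (σ m) (τ i) = σ (Fin.succAbove m i)) ∧
      (∀ τ' : Fin (k + l) → Fin (k + l),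
          (∀ i : Fin (k + l), Fin.succAbove (σ m) (τ' i) = σ (Fin.succAbove m i)) →
          τ' = τ) ∧
      ∃ hbij : Function.Bijective τ,
        IsShuffle k τ ∧
        Equiv.Perm.sign (Equiv.ofBijective τ hbij)
          = (-1 : ℤˣ) ^ ((σ m : ℕ) - (m : ℕ)) * Equiv.Perm.sign σ := by
  refine ⟨σ.removeNth m, σ.succAbove_removeNth_apply m,
    fun _ => Equiv.Perm.removeNth_eq_of_succAbove_comp, (σ.removeNth m).bijective,
    hσ.removeNth hm, ?_⟩
  have hle : (m : ℕ) ≤ σ m := hσ.le_apply m hm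
  rw [Equiv.ofBijective_coe, Equiv.Perm.sign_removeNth]
  congr 1
  exact neg_one_pow_congr (by rw [Nat.even_add, Nat.even_sub hle])
end

section
/- Let k, l ≥ 0, let σ be a (k,l)-shuffle of {1,…,k+l}, and let 1 ≤ j ≤ k+l−1 be such that exactly one of σ⁻¹(j), σ⁻¹(j+1) lies in {1,…,k}. Let σ' = τ_{j,j+1} ∘ σ, where τ_{j,j+1} is the transposition exchanging j and j+1. Then: (a) σ' is a (k,l)-shuffle; (b) sign(σ') = −sign(σ); and (c) defining b^σ(i) = #{p ∈ σ({1,…,k}) : p ≤ i} and c^σ(i) = i − b^σ(i) for 0 ≤ i ≤ k+l, one has b^σ(ε_j(i)) = b^{σ'}(ε_j(i)) and c^σ(ε_j(i)) = c^{σ'}(ε_j(i)) for all 0 ≤ i ≤ k+l−1, where ε_j : {0,…,k+l−1} → {0,…,k+l} is the unique strictly increasing map omitting the value j. (The cancellation step, case 3 of the proof of Lemma 3.2 of the paper: the terms indexed by (j,σ) and (j, τ_{j,j+1}∘σ) cancel.) -/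
/-- `b^σ(i)`: the number of elements of `B_σ = σ({0,…,k−1})` among the first `i`
positions, i.e. `#(B_σ ∩ {0,…,i−1})`. -/
def shuffleB {n : ℕ} (k : ℕ) (σ : Equiv.Perm (Fin n)) (i : ℕ) : ℕ :=
  (Finset.univ.filter (fun q : Fin n => (q : ℕ) < k ∧ (σ q : ℕ) < i)).card

/-!
Swapping the adjacent values `j < j + 1` after `σ` changes the relative order of two positions
only when their values are exactly `j` and `j + 1`. Such positions lie in different blocks, so
`σ'` is still increasing on each block. Finally `b^σ(i)` only sees which values are `< i`, and
the swap preserves that set unless `i = j + 1`, the one value missed by `ε`.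
-/

open Equiv

lemma Equiv.swap_apply_lt_swap_apply_of_covBy {α : Type*} [LinearOrder α] [DecidableEq α]
    {a b x y : α} (hab : a ⋖ b) (hxy : x < y) (hne : ¬(x = a ∧ y = b)) :
    swap a b x < swap a b y := by
  rcases eq_or_ne x a with rfl | hxa
  · have hyb : y ≠ b := fun h => hne ⟨rfl, h⟩
    have hby : b < y := lt_of_le_of_ne (hab.ge_of_gt hxy) hyb.symm
    rwa [swap_apply_left, swap_apply_of_ne_of_ne hxy.ne' hyb]
  rcases eq_or_ne x b with rfl | hxb
  · have hay : a < y := hab.1.trans hxy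
    rw [swap_apply_right, swap_apply_of_ne_of_ne hay.ne' hxy.ne']
    exact hay
  rw [swap_apply_of_ne_of_ne hxa hxb]
  rcases eq_or_ne y a with rfl | hya
  · rw [swap_apply_left]; exact hxy.trans hab.1
  rcases eq_or_ne y b with rfl | hyb
  · rw [swap_apply_right]; exact lt_of_le_of_ne (hab.le_of_lt hxy) hxa
  rwa [swap_apply_of_ne_of_ne hya hyb]

lemma Equiv.swap_apply_mem_iff {α : Type*} [DecidableEq α] {s : Set α} {a b : α}
    (h : a ∈ s ↔ b ∈ s) (x : α) : swap a b x ∈ s ↔ x ∈ s := by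
  rcases eq_or_ne x a with rfl | hxa
  · rw [swap_apply_left, h]
  rcases eq_or_ne x b with rfl | hxb
  · rw [swap_apply_right, h]
  rw [swap_apply_of_ne_of_ne hxa hxb]

lemma IsShuffle.trans_swap_of_covBy {n k : ℕ} {σ : Perm (Fin n)} (hσ : IsShuffle k σ)
    {a b : Fin n} (hab : a ⋖ b) (hblock : ((σ.symm a : ℕ) < k) ≠ ((σ.symm b : ℕ) < k)) :
    IsShuffle k (σ.trans (swap a b)) := by
  have hkey : ∀ p q : Fin n, ((p : ℕ) < k ↔ (q : ℕ) < k) → σ p < σ q →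
      σ.trans (swap a b) p < σ.trans (swap a b) q := by
    intro p q hpq hlt
    refine swap_apply_lt_swap_apply_of_covBy hab hlt ?_
    rintro ⟨hp, hq⟩
    rw [σ.symm_apply_eq.2 hp.symm, σ.symm_apply_eq.2 hq.symm] at hblock
    exact hblock (propext hpq)
  exact ⟨fun p q hpq hq => hkey p q (by omega) (hσ.1 p q hpq hq),
    fun p q hpq hp => hkey p q (by omega) (hσ.2 p q hpq hp)⟩

lemma shuffleB_trans_of_lt_iff {n k i : ℕ} (σ τ : Perm (Fin n))
    (hτ : ∀ x : Fin n, (τ x : ℕ) < i ↔ (x : ℕ) < i) :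
    shuffleB k (σ.trans τ) i = shuffleB k σ i := by
  simp only [shuffleB, trans_apply, hτ]

/-- cancellation step, case 3 of the proof of Lemma 3.2. Let `σ` be a
`(k,l)`-shuffle and `j` (0-based) such that exactly one of `σ⁻¹(j)`, `σ⁻¹(j+1)` lies in
the first block, and let `σ' = τ_{j,j+1} ∘ σ`.  Then `σ'` is a `(k,l)`-shuffle,
`sign σ' = −sign σ`, and `b^σ`, `c^σ = id − b^σ` agree with `b^{σ'}`, `c^{σ'}` on the
image of the increasing injection `ε` omitting `j+1` (0-based), i.e. at
`ε(i) = if i ≤ j then i else i+1` for all `0 ≤ i ≤ k+l−1`. -/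
theorem statement10 (k l : ℕ) (σ σ' : Equiv.Perm (Fin (k + l)))
    (hσ : IsShuffle k ⇑σ) (j : ℕ) (hj : j + 1 < k + l)
    (hone : (((σ.symm ⟨j, by omega⟩ : Fin (k + l)) : ℕ) < k)
              ≠ (((σ.symm ⟨j + 1, hj⟩ : Fin (k + l)) : ℕ) < k))
    (hσ' : σ' = σ.trans (Equiv.swap (⟨j, by omega⟩ : Fin (k + l)) ⟨j + 1, hj⟩)) :
    IsShuffle k ⇑σ' ∧
    Equiv.Perm.sign σ' = -Equiv.Perm.sign σ ∧
    ∀ i : ℕ, i < k + l →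
      shuffleB k σ (if i ≤ j then i else i + 1)
          = shuffleB k σ' (if i ≤ j then i else i + 1) ∧
      (if i ≤ j then i else i + 1) - shuffleB k σ (if i ≤ j then i else i + 1)
          = (if i ≤ j then i else i + 1) - shuffleB k σ' (if i ≤ j then i else i + 1) := by
  subst hσ'
  have hcov : (⟨j, by omega⟩ : Fin (k + l)) ⋖ ⟨j + 1, hj⟩ :=
    Fin.covBy_iff.2 (Order.covBy_add_one j)
  refine ⟨hσ.trans_swap_of_covBy hcov hone, ?_, fun i _ => ?_⟩
  · rw [Perm.sign_trans, Perm.sign_swap hcov.ne, neg_one_mul]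
  set m := if i ≤ j then i else i + 1 with hm
  have hside : j < m ↔ j + 1 < m := by rw [hm]; split_ifs <;> omega
  have hb : shuffleB k (σ.trans (swap _ _)) m = shuffleB k σ m :=
    shuffleB_trans_of_lt_iff σ _ (swap_apply_mem_iff (s := {x : Fin (k + l) | (x : ℕ) < m})
      (a := ⟨j, by omega⟩) (b := ⟨j + 1, hj⟩) hside)
  exact ⟨hb.symm, by rw [hb]⟩
end

section
/- For pairs (k,l), (k',l') of natural numbers, consider triples (ψ, u, f), where ψ : F_k → F_{k'} is a group homomorphism between the free groups on k and k' generators, u = (u₀,…,u_l) ∈ (F_{k'})^{l+1}, and f : {0,…,l} → {0,…,l'} is nondecreasing. Declare (ψ, u, f) ∼ (ψ₁, u₁, f) if there exists v ∈ F_{k'} with ψ₁(w) = v⁻¹ ψ(w) v for all w ∈ F_k and (u₁)_i = v⁻¹ u_i for all 0 ≤ i ≤ l. Define the composition of (ψ, u, f) : (k,l) → (k',l') with (ψ', u', f') : (k',l') → (k'',l'') to be (ψ'', u'', f'') with ψ'' = ψ' ∘ ψ, f'' = f' ∘ f, and u''_i = ψ'(u_i) · u'_{f(i)}. Then: (a)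 ∼ is an equivalence relation; (b) the composition is associative on representatives; and (c) the composition descends to ∼-equivalence classes, i.e., if (ψ,u,f) ∼ (ψ₁,u₁,f) and (ψ',u',f') ∼ (ψ'₁,u'₁,f'), then the composite of (ψ,u,f) and (ψ',u',f') is ∼-equivalent to the composite of (ψ₁,u₁,f) and (ψ'₁,u'₁,f'). (The content of Proposition 2.4 of the paper describing morphisms and composition in the category 𝔽Δ.) -/
/-- A representative of a morphism `(k,l) → (k',l')` in the category `𝔽Δ`: a triple
`(ψ, u, f)` where `ψ : F_k → F_{k'}` is a homomorphism of free groups,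
`u = (u₀,…,u_l) ∈ (F_{k'})^{l+1}`, and `f : {0,…,l} → {0,…,l'}` is nondecreasing. -/
structure FDHom (k l k' l' : ℕ) where
  ψ : FreeGroup (Fin k) →* FreeGroup (Fin k')
  u : Fin (l + 1) → FreeGroup (Fin k')
  f : Fin (l + 1) → Fin (l' + 1)
  hf : Monotone f

/-- The equivalence relation on triples: `(ψ,u,f) ∼ (ψ₁,u₁,f)` iff there is
`v ∈ F_{k'}` with `ψ₁(w) = v⁻¹ ψ(w) v` for all `w` and `(u₁)_i = v⁻¹ u_i` for all `i`. -/
def FDrel {k l k' l' : ℕ} (P Q : FDHom k l k' l') : Prop :=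
  P.f = Q.f ∧ ∃ v : FreeGroup (Fin k'),
    (∀ w : FreeGroup (Fin k), Q.ψ w = v⁻¹ * P.ψ w * v) ∧
    ∀ i : Fin (l + 1), Q.u i = v⁻¹ * P.u i

/-- Composition of representatives:
`(ψ',u',f') ∘ (ψ,u,f) = (ψ'∘ψ, (ψ'(u_i)·u'_{f(i)})_i, f'∘f)`. -/
def FDcomp {k l k' l' k'' l'' : ℕ} (Q : FDHom k' l' k'' l'') (P : FDHom k l k' l') :
    FDHom k l k'' l'' :=
  ⟨Q.ψ.comp P.ψ, fun i => Q.ψ (P.u i) * Q.u (P.f i), Q.f ∘ P.f, Q.hf.comp P.hf⟩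

/-!
Conjugating by `v` and then by `v'` is conjugating by `v * v'`, which gives the equivalence
relation. For compatibility with composition, if `P₁` is `P` conjugated by `v` and `Q₁` is `Q`
conjugated by `v'`, then `Q₁ ∘ P₁` is `Q ∘ P` conjugated by `Q.ψ v * v'`: applying `Q₁.ψ` to
`v⁻¹ * P.u i` produces `v'⁻¹ * (Q.ψ v)⁻¹ * Q.ψ (P.u i) * v'`, and the trailing `v'` cancels
against the `v'⁻¹` in `Q₁.u (P.f i) = v'⁻¹ * Q.u (P.f i)`.
-/

section

variable {k l k' l' : ℕ}

theorem FDrel.refl (P : FDHom k l k' l') : FDrel P P :=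
  ⟨rfl, 1, by simp, by simp⟩

theorem FDrel.symm {P Q : FDHom k l k' l'} : FDrel P Q → FDrel Q P := by
  rintro ⟨hf, v, hψ, hu⟩
  refine ⟨hf.symm, v⁻¹, fun w => ?_, fun i => ?_⟩
  · rw [hψ w]; group
  · rw [hu i]; group

theorem FDrel.trans {P Q R : FDHom k l k' l'} : FDrel P Q → FDrel Q R → FDrel P R := by
  rintro ⟨hf, v, hψ, hu⟩ ⟨hf', v', hψ', hu'⟩
  refine ⟨hf.trans hf', v * v', fun w => ?_, fun i => ?_⟩
  · rw [hψ' w, hψ w]; group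
  · rw [hu' i, hu i]; group

theorem FDrel.equivalence : Equivalence (@FDrel k l k' l') :=
  ⟨FDrel.refl, FDrel.symm, FDrel.trans⟩

theorem FDcomp_assoc {k₀ l₀ k₁ l₁ k₂ l₂ k₃ l₃ : ℕ}
    (P : FDHom k₀ l₀ k₁ l₁) (Q : FDHom k₁ l₁ k₂ l₂) (R : FDHom k₂ l₂ k₃ l₃) :
    FDcomp R (FDcomp Q P) = FDcomp (FDcomp R Q) P := by
  simp only [FDcomp, MonoidHom.comp_apply, map_mul, mul_assoc, Function.comp_apply]
  rfl

theorem FDrel.comp {k₀ l₀ k₁ l₁ k₂ l₂ : ℕ}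
    {P P₁ : FDHom k₀ l₀ k₁ l₁} {Q Q₁ : FDHom k₁ l₁ k₂ l₂}
    (hP : FDrel P P₁) (hQ : FDrel Q Q₁) : FDrel (FDcomp Q P) (FDcomp Q₁ P₁) := by
  obtain ⟨hf, v, hψ, hu⟩ := hP
  obtain ⟨hf', v', hψ', hu'⟩ := hQ
  refine ⟨?_, Q.ψ v * v', fun w => ?_, fun i => ?_⟩
  · change Q.f ∘ P.f = Q₁.f ∘ P₁.f
    rw [hf, hf']
  · change Q₁.ψ (P₁.ψ w) = _
    rw [hψ' _, hψ w]
    simp [FDcomp, mul_assoc]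
  · change Q₁.ψ (P₁.u i) * Q₁.u (P₁.f i) = _
    rw [hψ' _, hu i, hu' _, ← hf]
    simp [FDcomp, mul_assoc]

end

/-- Proposition 2.4: `∼` is an equivalence relation, the composition
of representatives is associative, and the composition descends to `∼`-equivalence
classes. -/
theorem statement13 :
    (∀ k l k' l' : ℕ, Equivalence (@FDrel k l k' l')) ∧
    (∀ (k₀ l₀ k₁ l₁ k₂ l₂ k₃ l₃ : ℕ)
        (P : FDHom k₀ l₀ k₁ l₁) (Q : FDHom k₁ l₁ k₂ l₂) (R : FDHom k₂ l₂ k₃ l₃),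
        FDcomp R (FDcomp Q P) = FDcomp (FDcomp R Q) P) ∧
    (∀ (k₀ l₀ k₁ l₁ k₂ l₂ : ℕ)
        (P P₁ : FDHom k₀ l₀ k₁ l₁) (Q Q₁ : FDHom k₁ l₁ k₂ l₂),
        FDrel P P₁ → FDrel Q Q₁ → FDrel (FDcomp Q P) (FDcomp Q₁ P₁)) :=
  ⟨fun _ _ _ _ => FDrel.equivalence,
    fun _ _ _ _ _ _ _ _ => FDcomp_assoc,
    fun _ _ _ _ _ _ _ _ _ _ => FDrel.comp⟩
end
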